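/- arXiv:2101.00058 — 9 statements merged into one kernel-verified Lean document; each statement's English description precedes it below -/
import Mathlib

section
/- For any solve result ⟨H, U, s⟩ with respect to a set of coverage constraints CC, U is a subset of the set of examples not covered by H, and s is less than or equal to the true score of H. Moreover, s equals the true score of H if and only if U equals the set of examples not covered by H. -/
/-!
Every example in `U` violates a coverage formula at `H`, and coverage formulas are necessary
conditions for coverage, so `U` consists of uncovered examples; monotonicity of the penalty sum
gives `s ≤ 𝒮(H)`. Since `s` is finite, equality cancels down to the penalties of the uncovered
examples missing from `U` summing to zero, and penalties are nonzero.
-/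

open Finset

theorem ENat.sum_eq_sum_iff_of_subset {ι : Type*} {f : ι → ℕ∞} {s t : Finset ι} (hst : s ⊆ t)
    (hf : ∀ i ∈ t, f i ≠ 0) (hs : ∑ i ∈ s, f i ≠ ⊤) :
    ∑ i ∈ s, f i = ∑ i ∈ t, f i ↔ s = t := by
  classical
  refine ⟨fun heq => ?_, fun h => h ▸ rfl⟩
  have hsdiff : ∑ i ∈ t \ s, f i = 0 := by
    have h := sum_sdiff (f := f) hst
    rw [← heq] at h
    exact ENat.add_left_injective_of_ne_top hs (h.trans (zero_add _).symm)
  have hempty : t \ s = ∅ := by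
    refine eq_empty_of_forall_notMem fun i hi => ?_
    exact hf i (mem_sdiff.1 hi).1 (sum_eq_zero_iff.1 hsdiff i hi)
  exact hst.antisymm (sdiff_eq_empty_iff_subset.1 hempty)

theorem solve_result_bounds_general {E R : Type} [Fintype E]
    (pen : E → ℕ∞) (covers : Finset R → E → Prop)
    [∀ H e, Decidable (covers H e)]
    (hpen : ∀ e, pen e ≠ 0)
    (CC : Set (E × (Finset R → Prop)))
    (hCC : ∀ c ∈ CC, ∀ H : Finset R, covers H c.1 → c.2 H)
    (H : Finset R) (U : Finset E) (s : ℕ∞)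
    (hU : ∀ e, e ∈ U ↔ ∃ F, (e, F) ∈ CC ∧ ¬ F H)
    (hs : s = (H.card : ℕ∞) + ∑ u ∈ U, pen u)
    (hfin : s ≠ ⊤) :
    U ⊆ Finset.univ.filter (fun e => ¬ covers H e) ∧
    s ≤ (H.card : ℕ∞) + ∑ e ∈ Finset.univ.filter (fun e => ¬ covers H e), pen e ∧
    (s = (H.card : ℕ∞) + ∑ e ∈ Finset.univ.filter (fun e => ¬ covers H e), pen e ↔
      U = Finset.univ.filter (fun e => ¬ covers H e)) := by
  have hsub : U ⊆ univ.filter (fun e => ¬ covers H e) := by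
    intro e he
    obtain ⟨F, hF, hFH⟩ := (hU e).1 he
    exact mem_filter.2 ⟨mem_univ e, fun hc => hFH (hCC (e, F) hF H hc)⟩
  subst hs
  have hUfin : ∑ u ∈ U, pen u ≠ ⊤ := (WithTop.add_ne_top.1 hfin).2
  refine ⟨hsub, by gcongr, ?_⟩
  rw [(ENat.add_right_injective_of_ne_top (ENat.natCast_ne_top H.card)).eq_iff]
  exact ENat.sum_eq_sum_iff_of_subset hsub (fun e _ => hpen e) hUfin

/-- Theorem lt: for any solve result ⟨H, U, s⟩ w.r.t. coverage constraints CC,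
U ⊆ 𝒰(H), s ≤ 𝒮(H), and s = 𝒮(H) iff U = 𝒰(H). -/
theorem solve_result_bounds {E R : Type} [Fintype E] [DecidableEq E] [DecidableEq R]
    (pen : E → ℕ∞) (covers : Finset R → E → Prop)
    [∀ H e, Decidable (covers H e)]
    (hpen : ∀ e, pen e ≠ 0)
    (CC : Set (E × (Finset R → Prop)))
    (hCC : ∀ c ∈ CC, ∀ H : Finset R, covers H c.1 → c.2 H)
    (H : Finset R) (U : Finset E) (s : ℕ∞)
    (hU : ∀ e, e ∈ U ↔ ∃ F, (e, F) ∈ CC ∧ ¬ F H)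
    (hs : s = (H.card : ℕ∞) + ∑ u ∈ U, pen u)
    (hfin : s ≠ ⊤) :
    U ⊆ Finset.univ.filter (fun e => ¬ covers H e) ∧
    s ≤ (H.card : ℕ∞) + ∑ e ∈ Finset.univ.filter (fun e => ¬ covers H e), pen e ∧
    (s = (H.card : ℕ∞) + ∑ e ∈ Finset.univ.filter (fun e => ¬ covers H e), pen e ↔
      U = Finset.univ.filter (fun e => ¬ covers H e)) :=
  solve_result_bounds_general pen covers hpen CC hCC H U s hU hs hfin
end

section
/- If ⟨H, U, s⟩ is an optimal solve result with respect to a set of coverage constraints CC (i.e., no solve result has strictly smaller score), and H is not an optimal inductive solution of the task, then there exists a counterexample to H not in U, i.e., an example e ∉ U that is not covered by H. -/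
/-! Every example with a violated constraint is uncovered, so the score of a solve result for
`H'` never exceeds the inductive score of `H'`. If all counterexamples to `H` lay in `U`, then `U`
would be exactly the set of examples uncovered by `H`, so `s` would be the score of `H`; being
below every solve result, it would be below every score, making `H` an optimal inductive solution. -/

namespace CoverageConstraints

open Finset

variable {E R : Type} [Fintype E] (covers : Finset R → E → Prop) [∀ H e, Decidable (covers H e)]

def uncovered (H : Finset R) : Finset E := univ.filter fun e => ¬ covers H e

def coverScore (pen : E → ℕ∞) (H : Finset R) : ℕ∞ := H.card + ∑ e ∈ uncovered covers H, pen e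

variable {covers} {CC : Set (E × (Finset R → Prop))}

theorem subset_uncovered_of_violated (hCC : ∀ c ∈ CC, ∀ H : Finset R, covers H c.1 → c.2 H)
    {H : Finset R} {U : Finset E} (hU : ∀ e, e ∈ U ↔ ∃ F, (e, F) ∈ CC ∧ ¬ F H) :
    U ⊆ uncovered covers H := by
  intro e he
  obtain ⟨F, hF, hnF⟩ := (hU e).1 he
  simpa [uncovered] using fun hc => hnF (hCC (e, F) hF H hc)

theorem eq_uncovered_of_covers_of_notMem (hCC : ∀ c ∈ CC, ∀ H : Finset R, covers H c.1 → c.2 H)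
    {H : Finset R} {U : Finset E} (hU : ∀ e, e ∈ U ↔ ∃ F, (e, F) ∈ CC ∧ ¬ F H)
    (hcovers : ∀ e ∉ U, covers H e) :
    U = uncovered covers H := by
  refine (subset_uncovered_of_violated hCC hU).antisymm fun e he => ?_
  by_contra hnU
  simp only [uncovered, mem_filter, mem_univ, true_and] at he
  exact he (hcovers e hnU)

theorem le_coverScore_of_forall_le_solve (hCC : ∀ c ∈ CC, ∀ H : Finset R, covers H c.1 → c.2 H)
    (pen : E → ℕ∞) {s : ℕ∞}
    (hopt : ∀ (H' : Finset R) (U' : Finset E) (s' : ℕ∞),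
      (∀ e, e ∈ U' ↔ ∃ F, (e, F) ∈ CC ∧ ¬ F H') →
      s' = (H'.card : ℕ∞) + ∑ u ∈ U', pen u → s' ≠ ⊤ → s ≤ s')
    (H' : Finset R) : s ≤ coverScore covers pen H' := by
  classical
  set U' : Finset E := univ.filter fun e => ∃ F, (e, F) ∈ CC ∧ ¬ F H'
  have hU' : ∀ e, e ∈ U' ↔ ∃ F, (e, F) ∈ CC ∧ ¬ F H' := by simp [U']
  have hle : (H'.card : ℕ∞) + ∑ u ∈ U', pen u ≤ coverScore covers pen H' :=
    add_le_add_right (sum_le_sum_of_subset (subset_uncovered_of_violated hCC hU')) _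
  rcases eq_top_or_lt_top (coverScore covers pen H') with htop | hlt
  · exact htop ▸ le_top
  · exact (hopt H' U' _ hU' rfl (hle.trans_lt hlt).ne).trans hle

end CoverageConstraints

open CoverageConstraints in
theorem optimal_solve_result_counterexample_general {E R : Type} [Fintype E]
    (pen : E → ℕ∞) (covers : Finset R → E → Prop)
    [∀ H e, Decidable (covers H e)]
    (CC : Set (E × (Finset R → Prop)))
    (hCC : ∀ c ∈ CC, ∀ H : Finset R, covers H c.1 → c.2 H)
    (score : Finset R → ℕ∞)
    (hscore : ∀ H' : Finset R,
      score H' = (H'.card : ℕ∞) + ∑ e ∈ Finset.univ.filter (fun e => ¬ covers H' e), pen e)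
    (H : Finset R) (U : Finset E) (s : ℕ∞)
    (hU : ∀ e, e ∈ U ↔ ∃ F, (e, F) ∈ CC ∧ ¬ F H)
    (hs : s = (H.card : ℕ∞) + ∑ u ∈ U, pen u)
    (hfin : s ≠ ⊤)
    (hopt : ∀ (H' : Finset R) (U' : Finset E) (s' : ℕ∞),
      (∀ e, e ∈ U' ↔ ∃ F, (e, F) ∈ CC ∧ ¬ F H') →
      s' = (H'.card : ℕ∞) + ∑ u ∈ U', pen u → s' ≠ ⊤ → s ≤ s')
    (hnotopt : ¬ (score H ≠ ⊤ ∧ ∀ H' : Finset R, score H ≤ score H')) :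
    ∃ e, e ∉ U ∧ ¬ covers H e := by
  by_contra! hcovers
  have hscore_eq : score = coverScore covers pen := funext hscore
  have hsH : s = score H := by
    rw [hs, hscore_eq, coverScore, ← eq_uncovered_of_covers_of_notMem hCC hU hcovers]
  refine hnotopt ⟨hsH ▸ hfin, fun H' => ?_⟩
  rw [← hsH, hscore_eq]
  exact le_coverScore_of_forall_le_solve hCC pen hopt H'

/-- Corollary re: if ⟨H, U, s⟩ is an optimal solve result for CC and H is not an
optimal inductive solution of the (satisfiable) task, then there is a
counterexample to H not in U. -/
theorem optimal_solve_result_counterexample {E R : Type} [Fintype E] [DecidableEq E] [DecidableEq R]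
    (pen : E → ℕ∞) (covers : Finset R → E → Prop)
    [∀ H e, Decidable (covers H e)]
    (CC : Set (E × (Finset R → Prop)))
    (hCC : ∀ c ∈ CC, ∀ H : Finset R, covers H c.1 → c.2 H)
    (score : Finset R → ℕ∞)
    (hscore : ∀ H' : Finset R,
      score H' = (H'.card : ℕ∞) + ∑ e ∈ Finset.univ.filter (fun e => ¬ covers H' e), pen e)
    (H : Finset R) (U : Finset E) (s : ℕ∞)
    (hU : ∀ e, e ∈ U ↔ ∃ F, (e, F) ∈ CC ∧ ¬ F H)
    (hs : s = (H.card : ℕ∞) + ∑ u ∈ U, pen u)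
    (hfin : s ≠ ⊤)
    (hopt : ∀ (H' : Finset R) (U' : Finset E) (s' : ℕ∞),
      (∀ e, e ∈ U' ↔ ∃ F, (e, F) ∈ CC ∧ ¬ F H') →
      s' = (H'.card : ℕ∞) + ∑ u ∈ U', pen u → s' ≠ ⊤ → s ≤ s')
    (hsat : ∃ H' : Finset R, score H' ≠ ⊤)
    (hnotopt : ¬ (score H ≠ ⊤ ∧ ∀ H' : Finset R, score H ≤ score H')) :
    ∃ e, e ∉ U ∧ ¬ covers H e :=
  optimal_solve_result_counterexample_general pen covers CC hCC score hscore H U s hU hs hfin hopt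
    hnotopt
end

section
/- The CDILP procedure terminates on any well-formed learning task: assuming the conflict analysis method is valid (it always produces a coverage constraint whose formula does not accept the current hypothesis, for a counterexample not in U), the hypothesis-search phase can never produce the same solve result in two distinct iterations, so since there are only finitely many solve results, the loop terminates. -/
/-!
If iterations `m < n` produced the same hypothesis and the same violated set, then the constraint
`⟨ce m, F m⟩` added after iteration `m` is still in `CC n` and still rejects `H n = H m`, so
`ce m ∈ U n = U m`, contradicting the choice of `ce m`. Hence `n ↦ (H n, U n)` is injective, which
is impossible for an infinite run since there are only finitely many such pairs.
-/

namespace CDILP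

variable {E R : Type*} {CC : ℕ → Set (E × (Finset R → Prop))} {H : ℕ → Finset R}
  {U : ℕ → Finset E} {ce : ℕ → E} {F : ℕ → Finset R → Prop}

theorem ce_mem_violated_of_lt (hmono : Monotone CC)
    (hU : ∀ n e, e ∈ U n ↔ ∃ G, (e, G) ∈ CC n ∧ ¬ G (H n))
    (hFH : ∀ n, ¬ F n (H n)) (hFCC : ∀ n, (ce n, F n) ∈ CC (n + 1))
    {m n : ℕ} (hmn : m < n) (hH : H n = H m) : ce m ∈ U n :=
  (hU n (ce m)).mpr ⟨F m, hmono hmn (hFCC m), hH ▸ hFH m⟩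

theorem solveResult_injective (hmono : Monotone CC)
    (hU : ∀ n e, e ∈ U n ↔ ∃ G, (e, G) ∈ CC n ∧ ¬ G (H n))
    (hce : ∀ n, ce n ∉ U n) (hFH : ∀ n, ¬ F n (H n)) (hFCC : ∀ n, (ce n, F n) ∈ CC (n + 1)) :
    Function.Injective fun n => (H n, U n) := by
  refine Function.Injective.of_lt_imp_ne fun m n hmn heq => ?_
  obtain ⟨hH, hU'⟩ := Prod.mk.inj heq
  exact hce m (hU' ▸ ce_mem_violated_of_lt hmono hU hFH hFCC hmn hH.symm)

end CDILP

theorem cdilp_terminates_general {E R : Type} [Fintype E] [Fintype R]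
    (covers : Finset R → E → Prop)
    (CC : ℕ → Set (E × (Finset R → Prop)))
    (H : ℕ → Finset R) (U : ℕ → Finset E)
    (ce : ℕ → E) (F : ℕ → Finset R → Prop)
    (hmono : ∀ m n : ℕ, m ≤ n → CC m ⊆ CC n)
    (hU : ∀ n e, e ∈ U n ↔ ∃ G, (e, G) ∈ CC n ∧ ¬ G (H n))
    (hce : ∀ n, ce n ∉ U n ∧ ¬ covers (H n) (ce n))
    (hF : ∀ n, ¬ F n (H n) ∧ (ce n, F n) ∈ CC (n + 1) ∧
      (∀ H' : Finset R, covers H' (ce n) → F n H')) :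
    False :=
  not_injective_infinite_finite _ <|
    CDILP.solveResult_injective (fun m n h => hmono m n h) hU (fun n => (hce n).1)
      (fun n => (hF n).1) (fun n => (hF n).2.1)

/-- Termination of CDILP: there is no infinite run of the CDILP loop, i.e. if for
every n we have a solve result ⟨H n, U n, s n⟩ for CC n, a counterexample ce n ∉ U n
not covered by H n, and a valid conflict-analysis result F n (a coverage constraint
whose formula does not accept H n) added to CC (n+1), then we reach a contradiction:
the same solve result can never be produced twice and there are finitely many. -/
theorem cdilp_terminates {E R : Type} [Fintype E] [Fintype R] [DecidableEq E] [DecidableEq R]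
    (pen : E → ℕ∞) (covers : Finset R → E → Prop)
    (CC : ℕ → Set (E × (Finset R → Prop)))
    (H : ℕ → Finset R) (U : ℕ → Finset E) (s : ℕ → ℕ∞)
    (ce : ℕ → E) (F : ℕ → Finset R → Prop)
    (hmono : ∀ m n : ℕ, m ≤ n → CC m ⊆ CC n)
    (hCC : ∀ n, ∀ c ∈ CC n, ∀ H' : Finset R, covers H' c.1 → c.2 H')
    (hU : ∀ n e, e ∈ U n ↔ ∃ G, (e, G) ∈ CC n ∧ ¬ G (H n))
    (hs : ∀ n, s n = ((H n).card : ℕ∞) + ∑ u ∈ U n, pen u)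
    (hsfin : ∀ n, s n ≠ ⊤)
    (hce : ∀ n, ce n ∉ U n ∧ ¬ covers (H n) (ce n))
    (hF : ∀ n, ¬ F n (H n) ∧ (ce n, F n) ∈ CC (n + 1) ∧
      (∀ H' : Finset R, covers H' (ce n) → F n H')) :
    False :=
  cdilp_terminates_general covers CC H U ce F hmono hU hce hF
end

section
/- If the CDILP procedure returns a hypothesis H, then H is an optimal inductive solution of the task; and if the task is unsatisfiable (no hypothesis has finite score), CDILP returns UNSATISFIABLE. In particular, if the task is satisfiable, the hypothesis returned upon termination (when the optimal solve result ⟨H, U, s⟩ satisfies U = 𝒰(H)) has minimal score among all hypotheses. -/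
/-! A coverage constraint `(e, F)` is only ever violated by hypotheses that do not cover `e`, so
the cost of a solve result for any hypothesis `H'` is a lower bound for `𝒮(H')`. An optimal solve
result whose violated examples are exactly the uncovered ones has cost `𝒮(H)`, hence
`𝒮(H) ≤ 𝒮(H')` for every `H'`; the same identity shows that no such result is finite when every
score is `⊤`. -/

open Finset

section Coverage

variable {E R : Type} [Fintype E] {covers : Finset R → E → Prop} {CC : Set (E × (Finset R → Prop))}

theorem exists_finset_mem_iff_violated (CC : Set (E × (Finset R → Prop))) (H : Finset R) :
    ∃ U : Finset E, ∀ e, e ∈ U ↔ ∃ F, (e, F) ∈ CC ∧ ¬ F H := by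
  classical
  exact ⟨univ.filter fun e => ∃ F, (e, F) ∈ CC ∧ ¬ F H, by simp⟩

theorem subset_uncovered_of_violated [∀ H e, Decidable (covers H e)]
    (hCC : ∀ c ∈ CC, ∀ H : Finset R, covers H c.1 → c.2 H) {H : Finset R} {U : Finset E}
    (hU : ∀ e, e ∈ U ↔ ∃ F, (e, F) ∈ CC ∧ ¬ F H) :
    U ⊆ univ.filter fun e => ¬ covers H e := by
  intro e he
  obtain ⟨F, hF, hFH⟩ := (hU e).1 he
  simpa using fun hcov => hFH (hCC (e, F) hF H hcov)

theorem solve_cost_le_score [∀ H e, Decidable (covers H e)] (pen : E → ℕ∞)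
    (hCC : ∀ c ∈ CC, ∀ H : Finset R, covers H c.1 → c.2 H) {H : Finset R} {U : Finset E}
    (hU : ∀ e, e ∈ U ↔ ∃ F, (e, F) ∈ CC ∧ ¬ F H) :
    (H.card : ℕ∞) + ∑ u ∈ U, pen u
      ≤ H.card + ∑ e ∈ univ.filter (fun e => ¬ covers H e), pen e :=
  add_le_add_right (sum_le_sum_of_subset (subset_uncovered_of_violated hCC hU)) _

end Coverage

theorem cdilp_sound_general {E R : Type} [Fintype E]
    (pen : E → ℕ∞) (covers : Finset R → E → Prop)
    [∀ H e, Decidable (covers H e)]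
    (CC : Set (E × (Finset R → Prop)))
    (hCC : ∀ c ∈ CC, ∀ H : Finset R, covers H c.1 → c.2 H)
    (score : Finset R → ℕ∞)
    (hscore : ∀ H' : Finset R,
      score H' = (H'.card : ℕ∞) + ∑ e ∈ Finset.univ.filter (fun e => ¬ covers H' e), pen e) :
    (∀ (H : Finset R) (U : Finset E) (s : ℕ∞),
      (∀ e, e ∈ U ↔ ∃ F, (e, F) ∈ CC ∧ ¬ F H) →
      s = (H.card : ℕ∞) + ∑ u ∈ U, pen u → s ≠ ⊤ →
      (∀ (H' : Finset R) (U' : Finset E) (s' : ℕ∞),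
        (∀ e, e ∈ U' ↔ ∃ F, (e, F) ∈ CC ∧ ¬ F H') →
        s' = (H'.card : ℕ∞) + ∑ u ∈ U', pen u → s' ≠ ⊤ → s ≤ s') →
      U = Finset.univ.filter (fun e => ¬ covers H e) →
      (score H ≠ ⊤ ∧ ∀ H' : Finset R, score H ≤ score H')) ∧
    ((∀ H' : Finset R, score H' = ⊤) →
      ¬ ∃ (H : Finset R) (U : Finset E) (s : ℕ∞),
        (∀ e, e ∈ U ↔ ∃ F, (e, F) ∈ CC ∧ ¬ F H) ∧
        s = (H.card : ℕ∞) + ∑ u ∈ U, pen u ∧ s ≠ ⊤ ∧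
        U = Finset.univ.filter (fun e => ¬ covers H e)) := by
  refine ⟨fun H U s _ hs hs_ne hopt hU_eq => ?_, ?_⟩
  · have hs_score : s = score H := by rw [hscore, hs, hU_eq]
    refine ⟨hs_score ▸ hs_ne, fun H' => ?_⟩
    obtain ⟨U', hU'⟩ := exists_finset_mem_iff_violated CC H'
    have hcost := solve_cost_le_score pen hCC hU'
    rw [← hscore] at hcost
    rw [← hs_score]
    by_cases htop : (H'.card : ℕ∞) + ∑ u ∈ U', pen u = ⊤
    · simp [top_le_iff.mp (htop ▸ hcost)]
    · exact (hopt H' U' _ hU' rfl htop).trans hcost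
  · rintro hall ⟨H, U, s, -, hs, hs_ne, hU_eq⟩
    exact hs_ne (by rw [hs, hU_eq, ← hscore, hall])

/-- Soundness of CDILP: (1) if CDILP returns a hypothesis H (i.e. the optimal solve
result ⟨H, U, s⟩ satisfies U = 𝒰(H)), then H is an optimal inductive solution;
(2) if the task is unsatisfiable (no hypothesis has finite score) then no such
terminating solve result exists, so CDILP returns UNSATISFIABLE. -/
theorem cdilp_sound {E R : Type} [Fintype E] [DecidableEq E] [DecidableEq R]
    (pen : E → ℕ∞) (covers : Finset R → E → Prop)
    [∀ H e, Decidable (covers H e)]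
    (CC : Set (E × (Finset R → Prop)))
    (hCC : ∀ c ∈ CC, ∀ H : Finset R, covers H c.1 → c.2 H)
    (score : Finset R → ℕ∞)
    (hscore : ∀ H' : Finset R,
      score H' = (H'.card : ℕ∞) + ∑ e ∈ Finset.univ.filter (fun e => ¬ covers H' e), pen e) :
    (∀ (H : Finset R) (U : Finset E) (s : ℕ∞),
      (∀ e, e ∈ U ↔ ∃ F, (e, F) ∈ CC ∧ ¬ F H) →
      s = (H.card : ℕ∞) + ∑ u ∈ U, pen u → s ≠ ⊤ →
      (∀ (H' : Finset R) (U' : Finset E) (s' : ℕ∞),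
        (∀ e, e ∈ U' ↔ ∃ F, (e, F) ∈ CC ∧ ¬ F H') →
        s' = (H'.card : ℕ∞) + ∑ u ∈ U', pen u → s' ≠ ⊤ → s ≤ s') →
      U = Finset.univ.filter (fun e => ¬ covers H e) →
      (score H ≠ ⊤ ∧ ∀ H' : Finset R, score H ≤ score H')) ∧
    ((∀ H' : Finset R, score H' = ⊤) →
      ¬ ∃ (H : Finset R) (U : Finset E) (s : ℕ∞),
        (∀ e, e ∈ U ↔ ∃ F, (e, F) ∈ CC ∧ ¬ F H) ∧
        s = (H.card : ℕ∞) + ∑ u ∈ U, pen u ∧ s ≠ ⊤ ∧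
        U = Finset.univ.filter (fun e => ¬ covers H e)) :=
  cdilp_sound_general pen covers CC hCC score hscore
end

section
/- Let e be a CDPI example and I a model of B ∪ e_ctx extending e's partial interpretation. For any hypothesis H ⊆ S_M, I is an accepting answer set of e with respect to B ∪ H if and only if the translation of ⟨I, e⟩ accepts H; that is, if and only if (1) H contains no rule of which I is not a model, and (2) for every subset-minimal set of rules {R¹,…,Rⁿ} ⊆ S_M such that I has a non-empty unfounded subset with respect to B ∪ e_ctx ∪ (S_M \ {R¹,…,Rⁿ}), H contains at least one of R¹,…,Rⁿ. -/
/-!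
Being a model of `B ∪ e_ctx ∪ H` only constrains `H` rule by rule. Unfoundedness of
`B ∪ e_ctx ∪ (S_M \ X)` is monotone in `X`, since removing rules can only create unfounded
sets; so `I` has no unfounded set w.r.t. `B ∪ e_ctx ∪ H = B ∪ e_ctx ∪ (S_M \ (S_M \ H))`
exactly when `S_M \ H` contains no minimal such `X`, i.e. when `H` meets every minimal `X`.
-/

theorem Finset.not_sdiff_iff_forall_minimal_inter_nonempty {α : Type*} [DecidableEq α]
    {Q : Finset α → Prop} (hQ : Monotone Q) (S H : Finset α) :
    ¬ Q (S \ H) ↔ ∀ X ⊆ S, Minimal Q X → (H ∩ X).Nonempty := by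
  constructor
  · intro hSH X hXS hX
    rw [← Finset.not_disjoint_iff_nonempty_inter]
    intro hdisj
    exact hSH (hQ (Finset.subset_sdiff.mpr ⟨hXS, hdisj.symm⟩) hX.prop)
  · intro hhit hSH
    obtain ⟨X, hXS, hX⟩ := exists_minimal_le_of_wellFoundedLT Q (S \ H) hSH
    have hdisj : Disjoint X H := (Finset.subset_sdiff.mp hXS).2
    exact Finset.not_disjoint_iff_nonempty_inter.mpr
      (hhit X (hXS.trans Finset.sdiff_subset) hX) hdisj.symm

theorem forall_mem_union_iff_forall_mem_of_subset {α : Type*} [DecidableEq α] {p : α → Prop}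
    {A S H : Finset α} (hA : ∀ a ∈ A, p a) (hH : H ⊆ S) :
    (∀ a ∈ A ∪ H, p a) ↔ ∀ a ∈ S, ¬ p a → a ∉ H := by
  refine ⟨fun h a _ hpa haH => hpa (h a (Finset.mem_union_right A haH)), fun h a ha => ?_⟩
  rcases Finset.mem_union.mp ha with haA | haH
  · exact hA a haA
  · by_contra hpa
    exact h a (hH haH) hpa haH

/-- Theorem translateCDPI: for a CDPI e and an interpretation I that is a model of
B ∪ e_ctx extending e_pi, a hypothesis H ⊆ S_M has I ∈ AAS(e, B ∪ H) iff the
translation of ⟨I, e⟩ accepts H: H contains no rule of which I is not a model, and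
for every subset-minimal set of rules X ⊆ S_M such that I has a non-empty unfounded
subset w.r.t. B ∪ e_ctx ∪ (S_M \ X), H intersects X. Answer sets are characterised
via unfounded sets, and unfoundedness is antitone in the program. -/
theorem translation_characterises_AAS {Rule Interp : Type} [DecidableEq Rule]
    (isModel : Interp → Rule → Prop)
    (unfounded : Interp → Finset Rule → Prop)
    (answerSet : Interp → Finset Rule → Prop)
    (hchar : ∀ (I : Interp) (P : Finset Rule),
      answerSet I P ↔ (∀ R ∈ P, isModel I R) ∧ ¬ unfounded I P)
    (hanti : ∀ (I : Interp) (P P' : Finset Rule), P ⊆ P' → unfounded I P' → unfounded I P)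
    (B ctx SM : Finset Rule) (I : Interp)
    (hIB : ∀ R ∈ B ∪ ctx, isModel I R)
    (H : Finset Rule) (hH : H ⊆ SM) :
    answerSet I (B ∪ ctx ∪ H) ↔
      ((∀ R ∈ SM, ¬ isModel I R → R ∉ H) ∧
       ∀ X ⊆ SM,
         (unfounded I (B ∪ ctx ∪ (SM \ X)) ∧
          ∀ Y ⊂ X, ¬ unfounded I (B ∪ ctx ∪ (SM \ Y))) →
         (H ∩ X).Nonempty) := by
  set Q : Finset Rule → Prop := fun X => unfounded I (B ∪ ctx ∪ (SM \ X))
  have hQ : Monotone Q := fun X Y hXY =>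
    hanti I _ _ (Finset.union_subset_union_right (Finset.sdiff_subset_sdiff le_rfl hXY))
  have hunfounded : unfounded I (B ∪ ctx ∪ H) ↔ Q (SM \ H) := by
    simp only [Q, Finset.sdiff_sdiff_eq_self hH]
  rw [hchar, forall_mem_union_iff_forall_mem_of_subset hIB hH, hunfounded,
    Finset.not_sdiff_iff_forall_minimal_inter_nonempty hQ SM H]
  simp only [minimal_iff_forall_lt, Q]
end

section
/- Conflict analysis for negative examples (ILASP3): let e be a negative CDPI and H a hypothesis not covering e. The iterative procedure with ψ_γ (full translation) terminates, returning F, and: (1) ⟨e, ¬F⟩ is a coverage constraint; (2) H is not accepted by ¬F; in fact F accepts exactly those hypotheses H' for which AAS(e, B∪H') is non-empty. -/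
/-!
After `n` rounds the procedure has accepted exactly the hypotheses `H'` with
`I_k ∈ AAS(e, B ∪ H')` for some `k < n`, so on exit `F` accepts precisely the hypotheses
with a non-empty `AAS(e, B ∪ H')`. Each round accepts a hypothesis that was not accepted
before, so the sets of accepted hypotheses form a strictly increasing chain in the
`2 ^ |S_M|`-element type of hypotheses, which bounds the number of rounds.
-/

theorem iterate_or_iff_exists_lt {α ι : Type*} {P : ι → α → Prop} {F : ℕ → α → Prop}
    {I : ℕ → ι} {N : ℕ} (h0 : ∀ x, ¬ F 0 x)
    (hstep : ∀ n < N, ∀ x, F (n + 1) x ↔ F n x ∨ P (I n) x) :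
    ∀ n ≤ N, ∀ x, F n x ↔ ∃ k < n, P (I k) x := by
  intro n
  induction n with
  | zero => simpa using h0
  | succ n ih =>
    intro hn x
    rw [hstep n hn x, ih (Nat.le_of_succ_le hn) x]
    simp only [Nat.lt_succ_iff_lt_or_eq, or_and_right, exists_or, exists_eq_left]

theorem le_nat_card_of_ssubset_succ {α : Type*} [Finite α] {s : ℕ → Set α} {N : ℕ}
    (h : ∀ n < N, s n ⊂ s (n + 1)) : N ≤ Nat.card α := by
  have hlen : ∀ n ≤ N, n ≤ (s n).ncard := by
    intro n
    induction n with
    | zero => exact fun _ => Nat.zero_le _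
    | succ n ih =>
      intro hn
      exact (ih (Nat.le_of_succ_le hn)).trans_lt (Set.ncard_lt_ncard (h n hn))
  exact (hlen N le_rfl).trans (Set.ncard_le_card _)

theorem neg_conflict_analysis_ilasp3_general {R Interp : Type} [Fintype R]
    (aas tr : Interp → Finset R → Prop)
    (hchar : ∀ (I : Interp) (H' : Finset R), aas I H' ↔ tr I H')
    (H : Finset R) (hH : ∃ I : Interp, aas I H)
    (N : ℕ) (F : ℕ → Finset R → Prop) (Iseq : ℕ → Interp)
    (h0 : ∀ H' : Finset R, ¬ F 0 H')
    (hstep : ∀ n < N,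
      (∃ H' : Finset R, ¬ F n H' ∧ aas (Iseq n) H') ∧
      (∀ H' : Finset R, F (n + 1) H' ↔ F n H' ∨ tr (Iseq n) H'))
    (hexit : ¬ ∃ (I : Interp) (H' : Finset R), ¬ F N H' ∧ aas I H') :
    N ≤ 2 ^ Fintype.card R ∧
    (∀ H' : Finset R, (∀ I : Interp, ¬ aas I H') → ¬ F N H') ∧
    (¬ ¬ F N H) ∧
    (∀ H' : Finset R, F N H' ↔ ∃ I : Interp, aas I H') := by
  have hround : ∀ n < N, ∀ H', F (n + 1) H' ↔ F n H' ∨ aas (Iseq n) H' := fun n hn H' => by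
    rw [(hstep n hn).2, hchar]
  have hgrow : ∀ n < N, {H' | F n H'} ⊂ {H' | F (n + 1) H'} := by
    intro n hn
    obtain ⟨H', hnew, hcov⟩ := (hstep n hn).1
    refine (Set.ssubset_iff_of_subset fun H' h => (hround n hn H').2 (.inl h)).2 ?_
    exact ⟨H', (hround n hn H').2 (.inr hcov), hnew⟩
  have hacc : ∀ H', F N H' ↔ ∃ I, aas I H' := fun H' =>
    ⟨fun h => by
      obtain ⟨k, -, hk⟩ := (iterate_or_iff_exists_lt h0 hround N le_rfl H').1 h
      exact ⟨_, hk⟩,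
    fun ⟨I, hI⟩ => by_contra fun hF => hexit ⟨I, H', hF, hI⟩⟩
  refine ⟨?_, fun H' hno hF => ?_, not_not_intro ((hacc H).2 hH), hacc⟩
  · calc N ≤ Nat.card (Finset R) := le_nat_card_of_ssubset_succ hgrow
      _ = 2 ^ Fintype.card R := by rw [Nat.card_eq_fintype_card, Fintype.card_finset]
  · obtain ⟨I, hI⟩ := (hacc H').1 hF
    exact hno I hI

/-- Theorem neg_ilasp3: for a negative CDPI e and a hypothesis H not covering e,
the iterative conflict analysis with ψ_γ = 𝒯 terminates (in at most 2^|S_M|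
iterations), returning F such that (1) ⟨e, ¬F⟩ is a coverage constraint (every
hypothesis covering e is accepted by ¬F), (2) H is not accepted by ¬F, and in fact
F accepts exactly those H' with AAS(e, B∪H') non-empty. -/
theorem neg_conflict_analysis_ilasp3 {R Interp : Type} [Fintype R] [DecidableEq R]
    (aas tr : Interp → Finset R → Prop)
    (hchar : ∀ (I : Interp) (H' : Finset R), aas I H' ↔ tr I H')
    (H : Finset R) (hH : ∃ I : Interp, aas I H)
    (N : ℕ) (F : ℕ → Finset R → Prop) (Iseq : ℕ → Interp)
    (h0 : ∀ H' : Finset R, ¬ F 0 H')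
    (hstep : ∀ n < N,
      (∃ H' : Finset R, ¬ F n H' ∧ aas (Iseq n) H') ∧
      (∀ H' : Finset R, F (n + 1) H' ↔ F n H' ∨ tr (Iseq n) H'))
    (hexit : ¬ ∃ (I : Interp) (H' : Finset R), ¬ F N H' ∧ aas I H') :
    N ≤ 2 ^ Fintype.card R ∧
    (∀ H' : Finset R, (∀ I : Interp, ¬ aas I H') → ¬ F N H') ∧
    (¬ ¬ F N H) ∧
    (∀ H' : Finset R, F N H' ↔ ∃ I : Interp, aas I H') :=
  neg_conflict_analysis_ilasp3_general aas tr hchar H hH N F Iseq h0 hstep hexit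
end

section
/- Correctness of the ω-formula for orderings: for a CDOE-setting with hypothesis space S_M of weak constraints, interpretations A₁, A₂, and comparison operator ≺, a hypothesis H ⊆ S_M satisfies ω(T, A₁, A₂, ≺) if and only if A₁ ≺_{B∪H} A₂, where ω is the lexicographic disjunction over priority levels l₁ > … > lₙ of 'equal at all higher levels and ≺ at this level' conditions on optimisation differences. -/
section OptimisationDifference

variable {α : Type*} [AddCommGroup α] {a b c s : α}

theorem eq_neg_iff_of_sub_eq_add (h : a - b = c + s) : s = -c ↔ a = b := by
  rw [← sub_eq_zero (a := a), h, add_comm, add_eq_zero_iff_eq_neg]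

theorem lt_neg_iff_of_sub_eq_add [LinearOrder α] [IsOrderedAddMonoid α] (h : a - b = c + s) :
    s < -c ↔ a < b := by
  rw [← sub_neg (a := a), h, add_comm, ← lt_neg_iff_add_neg]

end OptimisationDifference

theorem omega_correct_general {R L : Type} [LinearOrder L]
    (H : Finset R)
    (dB : L → ℤ) (dR : R → L → ℤ)
    (P1 P2 : L → ℤ)
    (hadd : ∀ l : L, P1 l - P2 l = dB l + ∑ r ∈ H, dR r l) :
    ((∃ l : L, (∑ r ∈ H, dR r l) < -dB l ∧ ∀ m, l < m → (∑ r ∈ H, dR r m) = -dB m) ↔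
     (∃ l : L, P1 l < P2 l ∧ ∀ m, l < m → P1 m = P2 m)) :=
  exists_congr fun l => and_congr (lt_neg_iff_of_sub_eq_add (hadd l))
    (forall₂_congr fun m _ => eq_neg_iff_of_sub_eq_add (hadd m))

/-- Theorem omega (for ≺ = <): with additive optimisation differences
Δ^{B∪H}_l(A₁,A₂) = Δ^B_l(A₁,A₂) + Σ_{R∈H} Δ^R_l(A₁,A₂), a hypothesis H ⊆ S_M
satisfies ω(T,A₁,A₂,<) (the lexicographic disjunction over levels of
"Σ_{R∈H} Δ^R_l < Δ^B_l(A₂,A₁) and equality at all higher levels") iff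
A₁ ≺_{B∪H} A₂, i.e. A₁ dominates A₂ w.r.t. B ∪ H. -/
theorem omega_correct {R L : Type} [DecidableEq R] [LinearOrder L] [Fintype L]
    (SM H : Finset R) (hH : H ⊆ SM)
    (dB : L → ℤ) (dR : R → L → ℤ)
    (P1 P2 : L → ℤ)
    (hadd : ∀ l : L, P1 l - P2 l = dB l + ∑ r ∈ H, dR r l) :
    ((∃ l : L, (∑ r ∈ H, dR r l) < -dB l ∧ ∀ m, l < m → (∑ r ∈ H, dR r m) = -dB m) ↔
     (∃ l : L, P1 l < P2 l ∧ ∀ m, l < m → P1 m = P2 m)) :=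
  omega_correct_general H dB dR P1 P2 hadd
end

section
/- Validity of conflict analysis for brave ordering examples: let o = ⟨e₁, e₂, ≺⟩ be a brave CDOE and H a hypothesis that does not cover o. The iterative procedure (F := ⊥; while there exist ⟨I₁,I₂⟩ and H' with F not accepting H', I₁ ∈ AAS(e₁,B∪H'), I₂ ∈ AAS(e₂,B∪H'), I₁ ≺_{B∪H'} I₂, add the disjunct ψ(I₁,I₂,…)) terminates and returns F such that ⟨o, F⟩ is a coverage constraint and F does not accept H, for ψ = ψ_γ defined as 𝒯(I₁,e₁,T) ∧ 𝒯(I₂,e₂,T) ∧ ω(T,I₁,I₂,≺). -/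
/-!
Each iteration adds a disjunct accepting a hypothesis that `F` did not yet accept, so the sets
of accepted hypotheses form a strict chain in the power set of `S_M`, which bounds the number of
iterations. Each disjunct `ψ_γ` accepts exactly the hypotheses covered by its pair `⟨I₁, I₂⟩`,
so no disjunct, and hence never `F`, accepts the uncovering `H`.
-/

theorem Set.le_card_of_ssubset_chain {α : Type*} [Finite α] {N : ℕ} (s : ℕ → Set α)
    (hs : ∀ n < N, s n ⊂ s (n + 1)) : N ≤ Nat.card α := by
  have le_ncard : ∀ n ≤ N, n ≤ (s n).ncard := by
    intro n hn
    induction n with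
    | zero => exact Nat.zero_le _
    | succ n ih => exact (ih (by omega)).trans_lt (Set.ncard_lt_ncard (hs n (by omega)))
  exact (le_ncard N le_rfl).trans (Set.ncard_le_card _)

theorem Set.notMem_of_union_chain {α : Type*} {N : ℕ} {s t : ℕ → Set α} {x : α}
    (hs : ∀ n < N, s (n + 1) = s n ∪ t n) (h0 : x ∉ s 0) (ht : ∀ n < N, x ∉ t n) :
    x ∉ s N := by
  induction N with
  | zero => exact h0
  | succ n ih =>
    rw [hs n n.lt_succ_self, Set.mem_union, not_or]
    exact ⟨ih (fun m hm => hs m (by omega)) (fun m hm => ht m (by omega)), ht n n.lt_succ_self⟩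

theorem brave_ordering_conflict_analysis_general {R Interp : Type} [Fintype R]
    (aas1 aas2 tr1 tr2 : Interp → Finset R → Prop)
    (ord omega : Interp → Interp → Finset R → Prop)
    (hchar1 : ∀ (I : Interp) (H' : Finset R), aas1 I H' ↔ tr1 I H')
    (hchar2 : ∀ (I : Interp) (H' : Finset R), aas2 I H' ↔ tr2 I H')
    (homega : ∀ (I1 I2 : Interp) (H' : Finset R), omega I1 I2 H' ↔ ord I1 I2 H')
    (H : Finset R)
    (hH : ¬ ∃ I1 I2, aas1 I1 H ∧ aas2 I2 H ∧ ord I1 I2 H)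
    (N : ℕ) (F : ℕ → Finset R → Prop) (I1s I2s : ℕ → Interp)
    (h0 : ∀ H' : Finset R, ¬ F 0 H')
    (hstep : ∀ n < N,
      (∃ H' : Finset R, ¬ F n H' ∧ aas1 (I1s n) H' ∧ aas2 (I2s n) H' ∧
        ord (I1s n) (I2s n) H') ∧
      (∀ H' : Finset R, F (n + 1) H' ↔
        F n H' ∨ (tr1 (I1s n) H' ∧ tr2 (I2s n) H' ∧ omega (I1s n) (I2s n) H')))
    (hexit : ¬ ∃ (I1 I2 : Interp) (H' : Finset R),
      ¬ F N H' ∧ aas1 I1 H' ∧ aas2 I2 H' ∧ ord I1 I2 H') :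
    N ≤ 2 ^ Fintype.card R ∧
    (∀ H' : Finset R, (∃ I1 I2, aas1 I1 H' ∧ aas2 I2 H' ∧ ord I1 I2 H') → F N H') ∧
    ¬ F N H := by
  let disjunct (n : ℕ) : Set (Finset R) :=
    {H' | aas1 (I1s n) H' ∧ aas2 (I2s n) H' ∧ ord (I1s n) (I2s n) H'}
  have hgrow : ∀ n < N, {H' | F (n + 1) H'} = {H' | F n H'} ∪ disjunct n := fun n hn => by
    ext H'
    simp only [Set.mem_ofPred_eq, Set.mem_union, disjunct, hchar1, hchar2, ← homega]
    exact (hstep n hn).2 H'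
  have hstrict : ∀ n < N, {H' | F n H'} ⊂ {H' | F (n + 1) H'} := fun n hn => by
    rw [hgrow n hn, Set.ssubset_iff_of_subset Set.subset_union_left]
    obtain ⟨H', hnew, hcov⟩ := (hstep n hn).1
    exact ⟨H', Or.inr hcov, hnew⟩
  refine ⟨?_, fun H' ⟨I1, I2, hcov⟩ => ?_, ?_⟩
  · simpa [Nat.card_eq_fintype_card, Fintype.card_finset] using
      Set.le_card_of_ssubset_chain _ hstrict
  · by_contra hrej
    exact hexit ⟨I1, I2, H', hrej, hcov⟩
  · exact Set.notMem_of_union_chain hgrow (h0 H) fun n _ hcov => hH ⟨I1s n, I2s n, hcov⟩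

/-- Theorem translateCDOEterminate (for ψ_γ): iterative conflict analysis for a
brave CDOE o = ⟨e₁,e₂,≺⟩ and a hypothesis H not covering o terminates (in at most
2^|S_M| iterations) and returns F such that ⟨o, F⟩ is a coverage constraint (every
hypothesis covering o is accepted by F) and F does not accept H, where each
disjunct is ψ_γ = 𝒯(I₁,e₁,T) ∧ 𝒯(I₂,e₂,T) ∧ ω(T,I₁,I₂,≺). -/
theorem brave_ordering_conflict_analysis {R Interp : Type} [Fintype R] [DecidableEq R]
    (aas1 aas2 tr1 tr2 : Interp → Finset R → Prop)
    (ord omega : Interp → Interp → Finset R → Prop)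
    (hchar1 : ∀ (I : Interp) (H' : Finset R), aas1 I H' ↔ tr1 I H')
    (hchar2 : ∀ (I : Interp) (H' : Finset R), aas2 I H' ↔ tr2 I H')
    (homega : ∀ (I1 I2 : Interp) (H' : Finset R), omega I1 I2 H' ↔ ord I1 I2 H')
    (H : Finset R)
    (hH : ¬ ∃ I1 I2, aas1 I1 H ∧ aas2 I2 H ∧ ord I1 I2 H)
    (N : ℕ) (F : ℕ → Finset R → Prop) (I1s I2s : ℕ → Interp)
    (h0 : ∀ H' : Finset R, ¬ F 0 H')
    (hstep : ∀ n < N,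
      (∃ H' : Finset R, ¬ F n H' ∧ aas1 (I1s n) H' ∧ aas2 (I2s n) H' ∧
        ord (I1s n) (I2s n) H') ∧
      (∀ H' : Finset R, F (n + 1) H' ↔
        F n H' ∨ (tr1 (I1s n) H' ∧ tr2 (I2s n) H' ∧ omega (I1s n) (I2s n) H')))
    (hexit : ¬ ∃ (I1 I2 : Interp) (H' : Finset R),
      ¬ F N H' ∧ aas1 I1 H' ∧ aas2 I2 H' ∧ ord I1 I2 H') :
    N ≤ 2 ^ Fintype.card R ∧
    (∀ H' : Finset R, (∃ I1 I2, aas1 I1 H' ∧ aas2 I2 H' ∧ ord I1 I2 H') → F N H') ∧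
    ¬ F N H :=
  brave_ordering_conflict_analysis_general aas1 aas2 tr1 tr2 ord omega hchar1 hchar2 homega H hH N F
    I1s I2s h0 hstep hexit
end

section
/- Constraint propagation preserves soundness: if ⟨ce, F⟩ is a coverage constraint and, for every hypothesis H' not accepted by F, H' does not cover example e, then ⟨e, F⟩ is also a coverage constraint; moreover adding propagated constraints to CC preserves the property that for any solve result ⟨H, U, s⟩ of the enlarged CC, U ⊆ 𝒰(H) and s ≤ 𝒮(H). -/
section

variable {E R : Type}

def IsCoverageConstraint (covers : Finset R → E → Prop) (c : E × (Finset R → Prop)) : Prop :=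
  ∀ H, covers H c.1 → c.2 H

variable {covers : Finset R → E → Prop} {CC : Set (E × (Finset R → Prop))}

theorem isCoverageConstraint_of_forall_not_covers {e : E} {F : Finset R → Prop}
    (h : ∀ H, ¬ F H → ¬ covers H e) : IsCoverageConstraint covers (e, F) :=
  fun H => not_imp_not.1 (h H)

theorem not_covers_of_violated (hCC : ∀ c ∈ CC, IsCoverageConstraint covers c)
    {x : E} {G : Finset R → Prop} {H : Finset R} (hc : (x, G) ∈ CC) (hG : ¬ G H) :
    ¬ covers H x :=
  fun hcov => hG (hCC _ hc H hcov)

theorem violated_subset_uncovered [Fintype E] [∀ H e, Decidable (covers H e)]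
    (hCC : ∀ c ∈ CC, IsCoverageConstraint covers c) {H : Finset R} {U : Finset E}
    (hU : ∀ x, x ∈ U ↔ ∃ G, (x, G) ∈ CC ∧ ¬ G H) :
    U ⊆ Finset.univ.filter (fun x => ¬ covers H x) := by
  intro x hx
  obtain ⟨G, hc, hG⟩ := (hU x).1 hx
  simpa using not_covers_of_violated hCC hc hG

end

theorem constraint_propagation_sound_general {E R : Type} [Fintype E]
    (pen : E → ℕ∞) (covers : Finset R → E → Prop)
    [∀ H e, Decidable (covers H e)]
    (CC : Set (E × (Finset R → Prop)))
    (hCC : ∀ c ∈ CC, ∀ H' : Finset R, covers H' c.1 → c.2 H')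
    (e : E) (F : Finset R → Prop)
    (hprop : ∀ H' : Finset R, ¬ F H' → ¬ covers H' e) :
    (∀ H' : Finset R, covers H' e → F H') ∧
    (∀ (H : Finset R) (U : Finset E) (s : ℕ∞),
      (∀ x, x ∈ U ↔ ∃ G, (x, G) ∈ insert (e, F) CC ∧ ¬ G H) →
      s = (H.card : ℕ∞) + ∑ u ∈ U, pen u → s ≠ ⊤ →
      U ⊆ Finset.univ.filter (fun x => ¬ covers H x) ∧
      s ≤ (H.card : ℕ∞) + ∑ x ∈ Finset.univ.filter (fun x => ¬ covers H x), pen x) := by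
  have hF : IsCoverageConstraint covers (e, F) := isCoverageConstraint_of_forall_not_covers hprop
  refine ⟨hF, fun H U s hU hs _ => ?_⟩
  have hsub := violated_subset_uncovered (Set.forall_mem_insert.2 ⟨hF, hCC⟩) hU
  exact ⟨hsub, hs ▸ add_le_add le_rfl (Finset.sum_le_sum_of_subset hsub)⟩

/-- Constraint propagation preserves soundness: if ⟨ce, F⟩ is a coverage constraint
and every hypothesis not accepted by F fails to cover e, then ⟨e, F⟩ is also a
coverage constraint; moreover any solve result ⟨H, U, s⟩ of the enlarged constraint
set CC ∪ {⟨e, F⟩} still satisfies U ⊆ 𝒰(H) and s ≤ 𝒮(H). -/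
theorem constraint_propagation_sound {E R : Type} [Fintype E] [DecidableEq E] [DecidableEq R]
    (pen : E → ℕ∞) (covers : Finset R → E → Prop)
    [∀ H e, Decidable (covers H e)]
    (CC : Set (E × (Finset R → Prop)))
    (hCC : ∀ c ∈ CC, ∀ H' : Finset R, covers H' c.1 → c.2 H')
    (ce e : E) (F : Finset R → Prop)
    (hce : ∀ H' : Finset R, covers H' ce → F H')
    (hprop : ∀ H' : Finset R, ¬ F H' → ¬ covers H' e) :
    (∀ H' : Finset R, covers H' e → F H') ∧
    (∀ (H : Finset R) (U : Finset E) (s : ℕ∞),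
      (∀ x, x ∈ U ↔ ∃ G, (x, G) ∈ insert (e, F) CC ∧ ¬ G H) →
      s = (H.card : ℕ∞) + ∑ u ∈ U, pen u → s ≠ ⊤ →
      U ⊆ Finset.univ.filter (fun x => ¬ covers H x) ∧
      s ≤ (H.card : ℕ∞) + ∑ x ∈ Finset.univ.filter (fun x => ¬ covers H x), pen x) :=
  constraint_propagation_sound_general pen covers CC hCC e F hprop
end
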